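/- Let ν be a finite positive Borel measure supported in the closed unit disk {z ∈ ℂ : |z| ≤ 1}. Then the following are equivalent: (i) lim_{|a|→1⁻, a ∈ 𝔻} ∫ (1 - |a|²)/|1 - conj(a)·ξ|² dν(ξ) = 0; (ii) ν(S(h, θ₀)) = o(h) uniformly in θ₀, i.e. for every ε > 0 there exists h₀ > 0 such that ν(S(h, θ₀)) ≤ ε·h for all 0 < h ≤ h₀ and all θ₀ ∈ [0, 2π). -/

import Mathlib

/-!
Write `a = (1 - h) e^{iθ₀}` and `P_a(ξ) = (1 - |a|²) / |1 - āξ|²`. On the window `S(h, θ₀)`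
one has `|1 - āξ| ≤ 3h` while `1 - |a|² ≥ h`, so `P_a ≥ 1/(9h)` there and
`ν(S(h, θ₀)) ≤ 9h ∫ P_a dν`. Conversely, off `S(H, θ₀)` one has `|1 - āξ| ≥ H/π`, so
`P_a = O(4^{-k}/h)` on `S(2^k h, θ₀) \ S(2^{k-1} h, θ₀)`. Since `S(2^N h, θ₀)` covers the closed
disk once `2^N h ≥ π`, this gives `∫ P_a dν ≲ Σ_{k ≤ N} ν(S(2^k h, θ₀)) / (4^k h)`, which is small
as soon as `ν(S(x, θ₀)) = o(x)` uniformly in `θ₀`.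
-/

open MeasureTheory Filter Metric Complex

/-- The filter of points `a` of the open unit disk `𝔻` with `|a| → 1⁻`. -/
noncomputable def toBoundary : Filter ℂ :=
  Filter.comap (fun a : ℂ => ‖a‖) (nhdsWithin 1 (Set.Iio 1))

/-- The Carleson window `S(h, θ₀) = {r·e^{iθ} : 1 - h ≤ r ≤ 1, |θ - θ₀| ≤ h}`. -/
def carlesonWindow (h θ₀ : ℝ) : Set ℂ :=
  {z : ℂ | ∃ r θ : ℝ, 1 - h ≤ r ∧ r ≤ 1 ∧ |θ - θ₀| ≤ h ∧ z = r * Complex.exp (θ * Complex.I)}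

open ComplexConjugate Topology
open scoped Real

lemma exists_mem_Ico_eq_norm_mul_exp (z : ℂ) (c : ℝ) :
    ∃ θ ∈ Set.Ico c (c + 2 * π), z = ‖z‖ * exp (θ * I) := by
  refine ⟨toIcoMod Real.two_pi_pos c (arg z), toIcoMod_mem_Ico _ _ _, ?_⟩
  have := exp_mul_I_periodic.sub_zsmul_eq (x := (arg z : ℂ)) (toIcoDiv Real.two_pi_pos c (arg z))
  rw [toIcoMod, ofReal_sub, ofReal_zsmul, ofReal_mul, ofReal_ofNat, this]
  exact (norm_mul_exp_arg_mul_I z).symm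

lemma carlesonWindow_eq_image (h θ₀ : ℝ) :
    carlesonWindow h θ₀ = (fun p : ℝ × ℝ => (p.1 : ℂ) * exp (p.2 * I)) ''
      (Set.Icc (1 - h) 1 ×ˢ Set.Icc (θ₀ - h) (θ₀ + h)) := by
  ext z
  simp only [carlesonWindow, Set.mem_ofPred_eq, Set.mem_image, Set.mem_prod, Set.mem_Icc,
    Prod.exists, abs_sub_le_iff]
  constructor
  · rintro ⟨r, θ, hr₀, hr₁, ⟨hθ₀, hθ₁⟩, rfl⟩
    exact ⟨r, θ, ⟨⟨hr₀, hr₁⟩, by linarith, by linarith⟩, rfl⟩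
  · rintro ⟨r, θ, ⟨⟨hr₀, hr₁⟩, hθ₀, hθ₁⟩, rfl⟩
    exact ⟨r, θ, hr₀, hr₁, ⟨by linarith, by linarith⟩, rfl⟩

lemma isCompact_carlesonWindow (h θ₀ : ℝ) : IsCompact (carlesonWindow h θ₀) := by
  rw [carlesonWindow_eq_image]
  exact (isCompact_Icc.prod isCompact_Icc).image (by fun_prop)

lemma norm_ofReal_mul_exp (ρ θ : ℝ) : ‖(ρ : ℂ) * exp (θ * I)‖ = |ρ| := by
  rw [norm_mul, norm_exp_ofReal_mul_I, mul_one, norm_real, Real.norm_eq_abs]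

lemma conj_ofReal_mul_exp_mul (ρ α r β : ℝ) :
    conj ((ρ : ℂ) * exp (α * I)) * (r * exp (β * I)) =
      ((ρ * r : ℝ) : ℂ) * exp ((β - α : ℝ) * I) := by
  rw [map_mul, conj_ofReal, ← exp_conj, map_mul, conj_ofReal, conj_I]
  push_cast
  rw [sub_mul, sub_eq_neg_add, Complex.exp_add, ← neg_mul_comm]
  ring_nf

lemma norm_one_sub_ofReal_mul_exp_sq (s t : ℝ) :
    ‖1 - s * exp (t * I)‖ ^ 2 = (s - Real.cos t) ^ 2 + Real.sin t ^ 2 := by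
  rw [Complex.sq_norm, normSq_apply]
  simp only [sub_re, one_re, mul_re, ofReal_re, exp_ofReal_mul_I_re, ofReal_im,
    exp_ofReal_mul_I_im, zero_mul, sub_zero, sub_im, one_im, mul_im, add_zero, zero_sub, mul_neg,
    neg_mul, neg_neg]
  linear_combination (s ^ 2 - 1) * Real.sin_sq_add_cos_sq t

lemma norm_one_sub_ofReal_mul_exp_le {s : ℝ} (hs₀ : 0 ≤ s) (hs₁ : s ≤ 1) (t : ℝ) :
    ‖1 - s * exp (t * I)‖ ≤ 1 - s + |t| := by
  have hexp : ‖1 - exp (t * I)‖ ≤ |t| := by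
    rw [norm_sub_rev, mul_comm]
    exact Real.norm_exp_I_mul_ofReal_sub_one_le
  calc ‖1 - s * exp (t * I)‖ = ‖((1 - s : ℝ) : ℂ) + s * (1 - exp (t * I))‖ := by
        push_cast; ring_nf
    _ ≤ 1 - s + s * |t| := by
        refine (norm_add_le _ _).trans ?_
        rw [norm_real, norm_mul, norm_real, Real.norm_of_nonneg (by linarith),
          Real.norm_of_nonneg hs₀]
        gcongr
    _ ≤ 1 - s + |t| := by nlinarith [abs_nonneg t]

lemma abs_div_pi_le_norm_one_sub_ofReal_mul_exp {s t : ℝ} (hs : 0 ≤ s) (ht : |t| ≤ π) :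
    |t| / π ≤ ‖1 - s * exp (t * I)‖ := by
  have hπ := Real.pi_pos
  have hnonneg : 0 ≤ |t| / π := by positivity
  refine abs_le_of_sq_le_sq' ?_ (norm_nonneg _) |>.2
  rw [norm_one_sub_ofReal_mul_exp_sq]
  rcases le_or_gt |t| (π / 2) with hsmall | hlarge
  · have hjordan := Real.mul_le_sin (abs_nonneg t) hsmall
    have hsin : |t| / π ≤ |Real.sin t| := by
      rw [Real.abs_sin_eq_sin_abs_of_abs_le_pi ht]
      linarith [show 2 / π * |t| = 2 * (|t| / π) by ring]
    nlinarith [sq_abs (Real.sin t), sq_nonneg (s - Real.cos t)]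
  · have hcos : Real.cos t ≤ 0 := by
      rw [← Real.cos_abs]
      exact Real.cos_nonpos_of_pi_div_two_le_of_le hlarge.le (by linarith)
    have hle_one : |t| / π ≤ 1 := div_le_one_of_le₀ ht hπ.le
    nlinarith [Real.sin_sq_add_cos_sq t]

lemma mem_carlesonWindow_of_norm_le_one {ξ : ℂ} (hξ : ‖ξ‖ ≤ 1) {H : ℝ} (hH : π ≤ H) (θ₀ : ℝ) :
    ξ ∈ carlesonWindow H θ₀ := by
  obtain ⟨θ, ⟨hθ₁, hθ₂⟩, hξθ⟩ := exists_mem_Ico_eq_norm_mul_exp ξ (θ₀ - π)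
  refine ⟨‖ξ‖, θ, ?_, hξ, abs_sub_le_iff.2 ⟨by linarith, by linarith⟩, hξθ⟩
  linarith [norm_nonneg ξ, Real.pi_gt_three]

section windows

variable {h θ₀ : ℝ}

lemma norm_ofReal_one_sub_mul_exp (hh1 : h ≤ 1) :
    ‖((1 - h : ℝ) : ℂ) * exp (θ₀ * I)‖ = 1 - h := by
  rw [norm_ofReal_mul_exp, abs_of_nonneg (by linarith)]

lemma norm_le_one_of_mem_carlesonWindow (hh1 : h ≤ 1) {ξ : ℂ} (hξ : ξ ∈ carlesonWindow h θ₀) :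
    ‖ξ‖ ≤ 1 := by
  obtain ⟨r, θ, hr₀, hr₁, -, rfl⟩ := hξ
  rw [norm_ofReal_mul_exp, abs_of_nonneg (by linarith)]
  exact hr₁

lemma norm_one_sub_conj_mul_le_of_mem (hh : 0 ≤ h) (hh1 : h ≤ 1) {ξ : ℂ}
    (hξ : ξ ∈ carlesonWindow h θ₀) :
    ‖1 - conj (((1 - h : ℝ) : ℂ) * exp (θ₀ * I)) * ξ‖ ≤ 3 * h := by
  obtain ⟨r, θ, hr₀, hr₁, hθ, rfl⟩ := hξ
  rw [conj_ofReal_mul_exp_mul]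
  refine (norm_one_sub_ofReal_mul_exp_le (by nlinarith) (by nlinarith) _).trans ?_
  nlinarith

lemma div_pi_le_norm_one_sub_conj_mul_of_notMem (hh : 0 ≤ h) (hh1 : h ≤ 1) {H : ℝ}
    (hH : 0 ≤ H) {ξ : ℂ} (hξ : ‖ξ‖ ≤ 1) (hξH : ξ ∉ carlesonWindow H θ₀) :
    H / π ≤ ‖1 - conj (((1 - h : ℝ) : ℂ) * exp (θ₀ * I)) * ξ‖ := by
  obtain ⟨θ, ⟨hθ₁, hθ₂⟩, hξθ⟩ := exists_mem_Ico_eq_norm_mul_exp ξ (θ₀ - π)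
  have hθπ : |θ - θ₀| ≤ π := abs_sub_le_iff.2 ⟨by linarith, by linarith⟩
  have hs : 0 ≤ (1 - h) * ‖ξ‖ := by have := norm_nonneg ξ; positivity
  rw [hξθ, conj_ofReal_mul_exp_mul]
  by_cases hr : 1 - H ≤ ‖ξ‖
  · have hθH : H < |θ - θ₀| := by
      by_contra! hθH
      exact hξH ⟨‖ξ‖, θ, hr, hξ, hθH, hξθ⟩
    calc H / π ≤ |θ - θ₀| / π := by gcongr
      _ ≤ _ := abs_div_pi_le_norm_one_sub_ofReal_mul_exp hs hθπ
  · have hHπ : H / π ≤ H := div_le_self hH (by linarith [Real.pi_gt_three])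
    have := norm_sub_norm_le (1 : ℂ) (((1 - h) * ‖ξ‖ : ℝ) * exp ((θ - θ₀ : ℝ) * I))
    rw [norm_one, norm_ofReal_mul_exp, abs_of_nonneg hs] at this
    nlinarith [norm_nonneg ξ]

end windows

/-- `|k_a(ξ)|²` for the normalized Szegő kernel `k_a(ξ) = √(1 - |a|²) / (1 - āξ)` of `H²`. On `𝕋`
it agrees with Mathlib's `poissonKernel 0 a`, but not inside the disk, where `ν` may live. -/
noncomputable def szegoKernelSq (a ξ : ℂ) : ℝ := (1 - ‖a‖ ^ 2) / ‖1 - conj a * ξ‖ ^ 2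

lemma szegoKernelSq_nonneg {a : ℂ} (ha : ‖a‖ ≤ 1) (ξ : ℂ) : 0 ≤ szegoKernelSq a ξ := by
  have := norm_nonneg a
  exact div_nonneg (by nlinarith) (sq_nonneg _)

lemma one_sub_norm_le_norm_one_sub_conj_mul (a : ℂ) {ξ : ℂ} (hξ : ‖ξ‖ ≤ 1) :
    1 - ‖a‖ ≤ ‖1 - conj a * ξ‖ := by
  have := norm_sub_norm_le 1 (conj a * ξ)
  rw [norm_one, norm_mul, norm_conj] at this
  nlinarith [norm_nonneg a]

lemma szegoKernelSq_le_of_le_norm {a ξ : ℂ} (ha : ‖a‖ ≤ 1) {d : ℝ} (hd : 0 < d)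
    (hdξ : d ≤ ‖1 - conj a * ξ‖) : szegoKernelSq a ξ ≤ 2 * (1 - ‖a‖) / d ^ 2 := by
  have := norm_nonneg a
  exact div_le_div₀ (by nlinarith) (by nlinarith) (by positivity) (by gcongr)

lemma integrable_szegoKernelSq {ν : Measure ℂ} [IsFiniteMeasure ν] (hν : ∀ᵐ ξ ∂ν, ‖ξ‖ ≤ 1)
    {a : ℂ} (ha : ‖a‖ < 1) : Integrable (szegoKernelSq a) ν := by
  have hmeas : Measurable (szegoKernelSq a) := by unfold szegoKernelSq; fun_prop
  refine .of_bound hmeas.aestronglyMeasurable (2 * (1 - ‖a‖) / (1 - ‖a‖) ^ 2) ?_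
  filter_upwards [hν] with ξ hξ
  rw [Real.norm_of_nonneg (szegoKernelSq_nonneg ha.le ξ)]
  exact szegoKernelSq_le_of_le_norm ha.le (by linarith)
    (one_sub_norm_le_norm_one_sub_conj_mul a hξ)

lemma toBoundary_hasBasis :
    toBoundary.HasBasis (fun l : ℝ => l < 1) (fun l => {a : ℂ | ‖a‖ ∈ Set.Ioo l 1}) :=
  (nhdsLT_basis 1).comap _

def VanishingCarleson (ν : Measure ℂ) : Prop :=
  ∀ ε > 0, ∃ h₀ > 0, ∀ h : ℝ, 0 < h → h ≤ h₀ →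
    ∀ θ₀ : ℝ, 0 ≤ θ₀ → θ₀ < 2 * π → ν (carlesonWindow h θ₀) ≤ ENNReal.ofReal (ε * h)

section forward

variable {h θ₀ : ℝ}

lemma one_div_le_szegoKernelSq_of_mem (hh : 0 < h) (hh1 : h ≤ 1) {ξ : ℂ}
    (hξ : ξ ∈ carlesonWindow h θ₀) :
    1 / (9 * h) ≤ szegoKernelSq (((1 - h : ℝ) : ℂ) * exp (θ₀ * I)) ξ := by
  have hden := norm_one_sub_conj_mul_le_of_mem hh.le hh1 hξ
  have hden₀ := one_sub_norm_le_norm_one_sub_conj_mul (((1 - h : ℝ) : ℂ) * exp (θ₀ * I))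
    (norm_le_one_of_mem_carlesonWindow hh1 hξ)
  rw [norm_ofReal_one_sub_mul_exp hh1] at hden₀
  rw [szegoKernelSq, norm_ofReal_one_sub_mul_exp hh1,
    div_le_div_iff₀ (by positivity) (by nlinarith)]
  have hden_sq := pow_le_pow_left₀ (by linarith) hden 2
  nlinarith [mul_nonneg hh.le (sub_nonneg.2 hh1)]

lemma measureReal_carlesonWindow_le_integral {ν : Measure ℂ} [IsFiniteMeasure ν]
    (hν : ∀ᵐ ξ ∂ν, ‖ξ‖ ≤ 1) (hh : 0 < h) (hh1 : h ≤ 1) :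
    ν.real (carlesonWindow h θ₀) ≤
      9 * h * ∫ ξ, szegoKernelSq (((1 - h : ℝ) : ℂ) * exp (θ₀ * I)) ξ ∂ν := by
  have ha : ‖((1 - h : ℝ) : ℂ) * exp (θ₀ * I)‖ < 1 := by
    rw [norm_ofReal_one_sub_mul_exp hh1]; linarith
  have hint := integrable_szegoKernelSq hν ha
  have hwin := setIntegral_ge_of_const_le (isCompact_carlesonWindow h θ₀).measurableSet
    (measure_ne_top ν _) (fun ξ hξ => one_div_le_szegoKernelSq_of_mem hh hh1 hξ) hint.integrableOn
  have hle := setIntegral_le_integral (s := carlesonWindow h θ₀) hint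
    (.of_forall (szegoKernelSq_nonneg ha.le))
  rw [smul_eq_mul, ← div_eq_mul_one_div, div_le_iff₀ (by positivity)] at hwin
  nlinarith

lemma vanishingCarleson_of_tendsto {ν : Measure ℂ} [IsFiniteMeasure ν] (hν : ∀ᵐ ξ ∂ν, ‖ξ‖ ≤ 1)
    (hP : Tendsto (fun a => ∫ ξ, szegoKernelSq a ξ ∂ν) toBoundary (𝓝 0)) :
    VanishingCarleson ν := by
  intro ε hε
  obtain ⟨l, hl, hsmall⟩ :=
    (toBoundary_hasBasis.tendsto_iff nhds_basis_ball).1 hP (ε / 9) (by positivity)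
  refine ⟨min 1 ((1 - l) / 2), lt_min one_pos (by linarith), fun h hh hle θ₀ _ _ => ?_⟩
  have hh1 : h ≤ 1 := hle.trans (min_le_left _ _)
  have hhl : h ≤ (1 - l) / 2 := hle.trans (min_le_right _ _)
  have ha := hsmall (((1 - h : ℝ) : ℂ) * exp (θ₀ * I)) (by
    simp only [Set.mem_ofPred_eq, norm_ofReal_one_sub_mul_exp hh1]
    constructor <;> linarith)
  rw [mem_ball, Real.dist_0_eq_abs, abs_lt] at ha
  rw [← ofReal_measureReal]
  gcongr
  nlinarith [measureReal_carlesonWindow_le_integral hν hh hh1 (θ₀ := θ₀) (ν := ν)]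

end forward

lemma sum_dyadic_div_le {w : ℝ → ℝ} {ε M h h₀ : ℝ} (hε : 0 ≤ ε) (hM : 0 ≤ M) (hh : 0 < h)
    (hh₀ : 0 < h₀) (hsmall : ∀ x, 0 < x → x ≤ h₀ → w x ≤ ε * x) (hbound : ∀ x, w x ≤ M)
    (N : ℕ) :
    ∑ k ∈ Finset.range (N + 1), w (2 ^ k * h) / (4 ^ k * h) ≤
      2 * ε + M * h ^ 2 / h₀ ^ 3 * 2 ^ (N + 1) := by
  -- Above `h₀` only `w ≤ M` is known; the cubic majorant keeps those terms of total size `O(h)`.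
  have hw : ∀ x, 0 < x → w x ≤ ε * x + M * x ^ 3 / h₀ ^ 3 := by
    intro x hx
    rcases le_or_gt x h₀ with hxh₀ | hxh₀
    · have : 0 ≤ M * x ^ 3 / h₀ ^ 3 := by positivity
      linarith [hsmall x hx hxh₀]
    · have : M ≤ M * x ^ 3 / h₀ ^ 3 := by
        rw [le_div_iff₀ (by positivity)]
        exact mul_le_mul_of_nonneg_left (pow_le_pow_left₀ hh₀.le hxh₀.le 3) hM
      linarith [hbound x, mul_nonneg hε hx.le]
  have hgeom : ∑ k ∈ Finset.range (N + 1), (2 : ℝ) ^ k ≤ 2 ^ (N + 1) := by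
    rw [geom_sum_eq (by norm_num) (N + 1)]
    norm_num
  calc ∑ k ∈ Finset.range (N + 1), w (2 ^ k * h) / (4 ^ k * h)
      ≤ ∑ k ∈ Finset.range (N + 1), (ε * (1 / 2) ^ k + M * h ^ 2 / h₀ ^ 3 * 2 ^ k) := by
        gcongr with k
        rw [div_le_iff₀ (by positivity)]
        refine (hw _ (by positivity)).trans (le_of_eq ?_)
        rw [show (4 : ℝ) ^ k = 2 ^ k * 2 ^ k by rw [← mul_pow]; norm_num, one_div_pow]
        field_simp
    _ ≤ 2 * ε + M * h ^ 2 / h₀ ^ 3 * 2 ^ (N + 1) := by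
        rw [Finset.sum_add_distrib, ← Finset.mul_sum, ← Finset.mul_sum]
        have h1 := mul_le_mul_of_nonneg_left (sum_geometric_two_le (N + 1)) hε
        have h2 := mul_le_mul_of_nonneg_left hgeom (by positivity : 0 ≤ M * h ^ 2 / h₀ ^ 3)
        linarith

section backward

variable {h θ₀ : ℝ}

lemma szegoKernelSq_le_of_notMem (hh : 0 ≤ h) (hh1 : h ≤ 1) {H : ℝ} (hH : 0 < H) {ξ : ℂ}
    (hξ : ‖ξ‖ ≤ 1) (hξH : ξ ∉ carlesonWindow H θ₀) :
    szegoKernelSq (((1 - h : ℝ) : ℂ) * exp (θ₀ * I)) ξ ≤ 2 * π ^ 2 * h / H ^ 2 := by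
  have ha := norm_ofReal_one_sub_mul_exp (θ₀ := θ₀) hh1
  have := szegoKernelSq_le_of_le_norm (by rw [ha]; linarith) (by positivity)
    (div_pi_le_norm_one_sub_conj_mul_of_notMem hh hh1 hH.le hξ hξH)
  rw [ha] at this
  refine this.trans (le_of_eq ?_)
  field_simp
  ring

lemma szegoKernelSq_le_of_forall_lt_notMem (hh : 0 < h) (hh1 : h ≤ 1) {ξ : ℂ} (hξ : ‖ξ‖ ≤ 1)
    {j : ℕ} (hj : ∀ m < j, ξ ∉ carlesonWindow (2 ^ m * h) θ₀) :
    szegoKernelSq (((1 - h : ℝ) : ℂ) * exp (θ₀ * I)) ξ ≤ 8 * π ^ 2 / (4 ^ j * h) := by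
  cases j with
  | zero =>
    have ha := norm_ofReal_one_sub_mul_exp (θ₀ := θ₀) hh1
    have hd := one_sub_norm_le_norm_one_sub_conj_mul (((1 - h : ℝ) : ℂ) * exp (θ₀ * I)) hξ
    rw [ha, sub_sub_cancel] at hd
    have := szegoKernelSq_le_of_le_norm (by rw [ha]; linarith) hh hd
    rw [ha, sub_sub_cancel] at this
    refine this.trans ?_
    rw [pow_zero, one_mul, div_le_div_iff₀ (by positivity) hh]
    have : (1 : ℝ) ≤ π ^ 2 := by nlinarith [Real.pi_gt_three]
    nlinarith [mul_pos hh hh]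
  | succ m =>
    refine (szegoKernelSq_le_of_notMem hh.le hh1 (by positivity) hξ (hj m m.lt_succ_self)).trans
      (le_of_eq ?_)
    rw [show (4 : ℝ) ^ (m + 1) = 4 * (2 ^ m) ^ 2 by
      rw [pow_succ, ← pow_mul, mul_comm m 2, pow_mul]; norm_num; ring]
    field_simp
    ring

lemma szegoKernelSq_le_sum_indicator (hh : 0 < h) (hh1 : h ≤ 1) {N : ℕ}
    (hN : π ≤ 2 ^ N * h) {ξ : ℂ} (hξ : ‖ξ‖ ≤ 1) :
    szegoKernelSq (((1 - h : ℝ) : ℂ) * exp (θ₀ * I)) ξ ≤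
      ∑ k ∈ Finset.range (N + 1),
        (carlesonWindow (2 ^ k * h) θ₀).indicator (fun _ => 8 * π ^ 2 / (4 ^ k * h)) ξ := by
  classical
  have hmem := mem_carlesonWindow_of_norm_le_one hξ hN θ₀
  have hex : ∃ k, ξ ∈ carlesonWindow (2 ^ k * h) θ₀ := ⟨N, hmem⟩
  calc szegoKernelSq (((1 - h : ℝ) : ℂ) * exp (θ₀ * I)) ξ
      ≤ 8 * π ^ 2 / (4 ^ Nat.find hex * h) :=
        szegoKernelSq_le_of_forall_lt_notMem hh hh1 hξ fun m => Nat.find_min hex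
    _ = (carlesonWindow (2 ^ Nat.find hex * h) θ₀).indicator
          (fun _ => 8 * π ^ 2 / (4 ^ Nat.find hex * h)) ξ :=
        (Set.indicator_of_mem (Nat.find_spec hex) fun _ => _).symm
    _ ≤ _ :=
        Finset.single_le_sum (f := fun k => (carlesonWindow (2 ^ k * h) θ₀).indicator
            (fun _ => 8 * π ^ 2 / (4 ^ k * h)) ξ)
          (fun k _ => Set.indicator_nonneg (fun _ _ => by positivity) ξ)
          (Finset.mem_range_succ_iff.2 (Nat.find_min' hex hmem))

lemma integral_szegoKernelSq_le_sum {ν : Measure ℂ} [IsFiniteMeasure ν] (hν : ∀ᵐ ξ ∂ν, ‖ξ‖ ≤ 1)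
    (hh : 0 < h) (hh1 : h ≤ 1) {N : ℕ} (hN : π ≤ 2 ^ N * h) :
    ∫ ξ, szegoKernelSq (((1 - h : ℝ) : ℂ) * exp (θ₀ * I)) ξ ∂ν ≤
      8 * π ^ 2 *
        ∑ k ∈ Finset.range (N + 1), ν.real (carlesonWindow (2 ^ k * h) θ₀) / (4 ^ k * h) := by
  have hint : ∀ k ∈ Finset.range (N + 1), Integrable
      ((carlesonWindow (2 ^ k * h) θ₀).indicator (fun _ => 8 * π ^ 2 / (4 ^ k * h))) ν :=
    fun k _ => (integrable_const _).indicator (isCompact_carlesonWindow _ _).measurableSet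
  have ha : ‖((1 - h : ℝ) : ℂ) * exp (θ₀ * I)‖ < 1 := by
    rw [norm_ofReal_one_sub_mul_exp hh1]; linarith
  refine (integral_mono_ae (integrable_szegoKernelSq hν ha) (integrable_finsetSum _ hint)
    (by filter_upwards [hν] with ξ hξ using szegoKernelSq_le_sum_indicator hh hh1 hN hξ)).trans
    (le_of_eq ?_)
  rw [integral_finsetSum _ hint, Finset.mul_sum]
  refine Finset.sum_congr rfl fun k _ => ?_
  rw [integral_indicator_const _ (isCompact_carlesonWindow _ _).measurableSet, smul_eq_mul]
  ring

lemma integral_szegoKernelSq_le {ν : Measure ℂ} [IsFiniteMeasure ν] (hν : ∀ᵐ ξ ∂ν, ‖ξ‖ ≤ 1)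
    {ε h₀ : ℝ} (hh : 0 < h) (hh1 : h ≤ 1) (hε : 0 ≤ ε) (hh₀ : 0 < h₀)
    (hwin : ∀ H, 0 < H → H ≤ h₀ → ν (carlesonWindow H θ₀) ≤ ENNReal.ofReal (ε * H)) :
    ∫ ξ, szegoKernelSq (((1 - h : ℝ) : ℂ) * exp (θ₀ * I)) ξ ∂ν ≤
      16 * π ^ 2 * ε + 32 * π ^ 3 * ν.real Set.univ * h / h₀ ^ 3 := by
  have hπ := Real.pi_gt_three
  obtain ⟨n, hn_le, hn_lt⟩ :=
    exists_nat_pow_near ((one_le_div hh).2 (by linarith)) (one_lt_two (α := ℝ))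
  rw [le_div_iff₀ hh] at hn_le
  rw [div_lt_iff₀ hh] at hn_lt
  have hsum := sum_dyadic_div_le (w := fun x => ν.real (carlesonWindow x θ₀)) hε
    measureReal_nonneg hh hh₀
    (fun x hx hxh₀ => ENNReal.toReal_le_of_le_ofReal (by positivity) (hwin x hx hxh₀))
    (fun x => measureReal_mono (Set.subset_univ _)) (n + 1)
  refine (integral_szegoKernelSq_le_sum hν hh hh1 hn_lt.le).trans ?_
  have hM : 0 ≤ ν.real Set.univ := measureReal_nonneg
  have hscale : ν.real Set.univ * h ^ 2 / h₀ ^ 3 * 2 ^ (n + 1 + 1) ≤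
      ν.real Set.univ * h / h₀ ^ 3 * (4 * π) := by
    rw [show ν.real Set.univ * h ^ 2 / h₀ ^ 3 * 2 ^ (n + 1 + 1) =
      ν.real Set.univ * h / h₀ ^ 3 * (4 * (2 ^ n * h)) by ring]
    gcongr
  calc 8 * π ^ 2 * ∑ k ∈ Finset.range (n + 1 + 1),
        ν.real (carlesonWindow (2 ^ k * h) θ₀) / (4 ^ k * h)
      ≤ 8 * π ^ 2 * (2 * ε + ν.real Set.univ * h / h₀ ^ 3 * (4 * π)) := by
        gcongr
        exact hsum.trans (by gcongr)
    _ = 16 * π ^ 2 * ε + 32 * π ^ 3 * ν.real Set.univ * h / h₀ ^ 3 := by ring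

end backward

lemma tendsto_of_vanishingCarleson {ν : Measure ℂ} [IsFiniteMeasure ν] (hν : ∀ᵐ ξ ∂ν, ‖ξ‖ ≤ 1)
    (hV : VanishingCarleson ν) :
    Tendsto (fun a => ∫ ξ, szegoKernelSq a ξ ∂ν) toBoundary (𝓝 0) := by
  rw [toBoundary_hasBasis.tendsto_iff nhds_basis_ball]
  intro ε hε
  have hπ := Real.pi_pos
  obtain ⟨h₀, hh₀, hwin⟩ := hV (ε / (32 * π ^ 2)) (by positivity)
  set M := ν.real Set.univ
  have hM : 0 ≤ M := measureReal_nonneg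
  set δ := min 1 (ε * h₀ ^ 3 / (64 * π ^ 3 * (M + 1)))
  have hδ : 0 < δ := lt_min one_pos (by positivity)
  refine ⟨1 - δ, by linarith, fun a ⟨ha₁, ha₂⟩ => ?_⟩
  obtain ⟨θ₀, ⟨hθ₀, hθ₀'⟩, ha⟩ := exists_mem_Ico_eq_norm_mul_exp a 0
  have hh : 0 < 1 - ‖a‖ := by linarith
  have hhδ : 1 - ‖a‖ < ε * h₀ ^ 3 / (64 * π ^ 3 * (M + 1)) :=
    (show 1 - ‖a‖ < δ by linarith).trans_le (min_le_right _ _)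
  have key := integral_szegoKernelSq_le hν hh (by linarith [norm_nonneg a]) (by positivity) hh₀
    fun H hH hHh₀ => hwin H hH hHh₀ θ₀ hθ₀ (by linarith)
  rw [sub_sub_cancel, ← ha] at key
  rw [mem_ball, Real.dist_0_eq_abs, abs_of_nonneg (integral_nonneg (szegoKernelSq_nonneg ha₂.le))]
  have htail : 32 * π ^ 3 * M * (1 - ‖a‖) / h₀ ^ 3 < ε / 2 := by
    rw [lt_div_iff₀ (by positivity)] at hhδ
    rw [div_lt_iff₀ (by positivity)]
    calc 32 * π ^ 3 * M * (1 - ‖a‖) = 32 * π ^ 3 * (M * (1 - ‖a‖)) := by ring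
      _ ≤ 32 * π ^ 3 * ((M + 1) * (1 - ‖a‖)) := by gcongr; linarith
      _ < ε / 2 * h₀ ^ 3 := by linarith
  have hmain : 16 * π ^ 2 * (ε / (32 * π ^ 2)) = ε / 2 := by field_simp; ring
  linarith

theorem shapiro_lemma_1_1 (ν : Measure ℂ) [IsFiniteMeasure ν]
    (hsupp : ν ((Metric.closedBall (0:ℂ) 1)ᶜ) = 0) :
    Filter.Tendsto
      (fun a : ℂ =>
        ∫ ξ, (1 - ‖a‖ ^ 2) / ‖1 - (starRingEnd ℂ) a * ξ‖ ^ 2 ∂ν)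
      toBoundary (nhds 0)
    ↔ ∀ ε > 0, ∃ h₀ > 0, ∀ h : ℝ, 0 < h → h ≤ h₀ →
        ∀ θ₀ : ℝ, 0 ≤ θ₀ → θ₀ < 2 * Real.pi →
          ν (carlesonWindow h θ₀) ≤ ENNReal.ofReal (ε * h) := by
  have hν : ∀ᵐ ξ ∂ν, ‖ξ‖ ≤ 1 := by
    filter_upwards [mem_ae_iff.2 hsupp] with ξ hξ
    rwa [mem_closedBall_zero_iff] at hξ
  exact ⟨vanishingCarleson_of_tendsto hν, tendsto_of_vanishingCarleson hν⟩
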